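/- Let m > 0, p ≥ 2 and ρ̄ > 0, and set q := 2(m + p − 2)/(m + p − 1). For ξ ≥ ρ̄ define Θ_{Φ,p}(ξ) := ∫_{ρ̄}^{ξ} (x − ρ̄)^{(p−2)/2} (m x^{m−1})^{1/2} dx and Θ_{σ,p}(ξ) := (m/2) ∫_{ρ̄}^{ξ} (x − ρ̄)^{p−2} x^{m−1} dx. Then q ∈ (0,2), and there exists a constant c ∈ (0,∞), depending only on m, p and ρ̄, such that for every ξ ≥ ρ̄: (ξ − ρ̄)^{p−2} ξ^m + Θ_{σ,p}(ξ) ≤ c ( 1 + Θ_{Φ,p}(ξ)^q ). -/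

import Mathlib

open MeasureTheory

/-!
Both sides grow like `ξ ^ (m + p - 2)`. On the left, `(ξ - ρ̄)^{p-2} ≤ ξ^{p-2}` and integrating
`x^{m-1}` give the bound `(3/2) ξ^{m+p-2}`. On the right, restricting the integral to `[3ξ/4, ξ]`,
where `x - ρ̄ ≥ ξ/4` once `ξ ≥ 2ρ̄`, gives `Θ_{Φ,p}(ξ) ≥ C ξ^{(m+p-1)/2}`, and `q` is exactly the
exponent with `q (m+p-1)/2 = m+p-2`. On the bounded range `ρ̄ ≤ ξ ≤ 2ρ̄` the constant `1` on the
right absorbs everything.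
-/

open Real Set

theorem two_mul_div_add_one_mem_Ioo {a : ℝ} (ha : 0 < a) : 2 * a / (a + 1) ∈ Ioo 0 2 :=
  ⟨by positivity, by rw [div_lt_iff₀ (by linarith)]; linarith⟩

theorem exists_le_mul_one_add_of_le_rpow {L R : ℝ → ℝ} {ρ ξ₀ s A B : ℝ} (hρ : 0 ≤ ρ)
    (hρξ₀ : ρ ≤ ξ₀) (hs : 0 ≤ s) (hA : 0 ≤ A) (hB : 0 < B)
    (hL : ∀ ξ, ρ ≤ ξ → L ξ ≤ A * ξ ^ s) (hR₀ : ∀ ξ, ρ ≤ ξ → 0 ≤ R ξ)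
    (hR : ∀ ξ, ξ₀ ≤ ξ → B * ξ ^ s ≤ R ξ) :
    ∃ c, 0 < c ∧ ∀ ξ, ρ ≤ ξ → L ξ ≤ c * (1 + R ξ) := by
  obtain ⟨c, hc⟩ : ∃ c, c = A * ξ₀ ^ s + A / B + 1 := ⟨_, rfl⟩
  have hA_div : 0 ≤ A / B := div_nonneg hA hB.le
  have hAξ₀ : 0 ≤ A * ξ₀ ^ s := mul_nonneg hA (rpow_nonneg (hρ.trans hρξ₀) s)
  refine ⟨c, by linarith, fun ξ hξ => ?_⟩
  have hRξ := hR₀ ξ hξ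
  have hc_le : c * R ξ ≤ c * (1 + R ξ) := by nlinarith
  rcases le_total ξ ξ₀ with hsmall | hlarge
  · calc L ξ ≤ A * ξ ^ s := hL ξ hξ
      _ ≤ A * ξ₀ ^ s := by gcongr; exact hρ.trans hξ
      _ ≤ c * (1 + R ξ) := by nlinarith
  · calc L ξ ≤ A / B * (B * ξ ^ s) := by rw [← mul_assoc, div_mul_cancel₀ A hB.ne']; exact hL ξ hξ
      _ ≤ A / B * R ξ := by gcongr; exact hR ξ hlarge
      _ ≤ c * R ξ := by gcongr; linarith
      _ ≤ c * (1 + R ξ) := hc_le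

theorem mul_rpow_le_rpow_sub_one {m θ ξ x : ℝ} (hm : 0 < m) (hθ : 0 < θ) (hξ : 0 < ξ)
    (hθx : θ * ξ ≤ x) (hxξ : x ≤ ξ) : θ ^ m * ξ ^ (m - 1) ≤ x ^ (m - 1) := by
  have hx : 0 < x := (mul_pos hθ hξ).trans_le hθx
  rw [rpow_sub_one hξ.ne', rpow_sub_one hx.ne', ← mul_div_assoc, ← mul_rpow hθ.le hξ.le]
  exact div_le_div₀ (rpow_nonneg hx.le _) (rpow_le_rpow (by positivity) hθx hm.le) hx hxξ

section Integrals

variable {a m ρ ξ : ℝ}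

theorem continuousOn_rpow_const_Ici (hρ : 0 < ρ) (s : ℝ) :
    ContinuousOn (fun x : ℝ => x ^ s) (Ici ρ) :=
  continuousOn_id.rpow_const fun _ hx => Or.inl (hρ.trans_le hx).ne'

theorem continuousOn_sub_rpow_Ici (ha : 0 ≤ a) :
    ContinuousOn (fun x : ℝ => (x - ρ) ^ a) (Ici ρ) :=
  (continuousOn_id.sub continuousOn_const).rpow_const fun _ _ => Or.inr ha

theorem integral_sub_rpow_mul_rpow_sub_one_le (ha : 0 ≤ a) (hm : 0 < m) (hρ : 0 < ρ)
    (hξ : ρ ≤ ξ) : ∫ x in ρ..ξ, (x - ρ) ^ a * x ^ (m - 1) ≤ ξ ^ a * ξ ^ m / m := by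
  have hcont := (continuousOn_rpow_const_Ici hρ (m - 1)).mono (Icc_subset_Ici_self : Icc ρ ξ ⊆ _)
  calc ∫ x in ρ..ξ, (x - ρ) ^ a * x ^ (m - 1)
      ≤ ∫ x in ρ..ξ, ξ ^ a * x ^ (m - 1) := by
        refine intervalIntegral.integral_mono_on hξ
          ((((continuousOn_sub_rpow_Ici ha).mono Icc_subset_Ici_self).mul
            hcont).intervalIntegrable_of_Icc hξ)
          ((continuousOn_const.mul hcont).intervalIntegrable_of_Icc hξ) fun x hx => ?_
        have : 0 ≤ x - ρ := by linarith [hx.1]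
        gcongr
        · exact rpow_nonneg (hρ.le.trans hx.1) _
        · linarith [hx.2]
    _ = ξ ^ a * ((ξ ^ m - ρ ^ m) / m) := by
        rw [intervalIntegral.integral_const_mul, integral_rpow (Or.inl (by linarith)),
          sub_add_cancel]
    _ ≤ ξ ^ a * ξ ^ m / m := by
        rw [← mul_div_assoc]
        gcongr
        · exact rpow_nonneg (hρ.le.trans hξ) a
        · exact sub_le_self _ (rpow_nonneg hρ.le m)

theorem sub_rpow_mul_rpow_add_integral_le (ha : 0 ≤ a) (hm : 0 < m) (hρ : 0 < ρ)
    (hξ : ρ ≤ ξ) :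
    (ξ - ρ) ^ a * ξ ^ m + m / 2 * ∫ x in ρ..ξ, (x - ρ) ^ a * x ^ (m - 1)
      ≤ 3 / 2 * ξ ^ (a + m) := by
  have hξ₀ : 0 < ξ := hρ.trans_le hξ
  have hfirst : (ξ - ρ) ^ a * ξ ^ m ≤ ξ ^ a * ξ ^ m := by
    gcongr
    linarith
  have hint := mul_le_mul_of_nonneg_left
    (integral_sub_rpow_mul_rpow_sub_one_le ha hm hρ hξ) (by positivity : 0 ≤ m / 2)
  rw [rpow_add hξ₀]
  calc _ ≤ ξ ^ a * ξ ^ m + m / 2 * (ξ ^ a * ξ ^ m / m) := add_le_add hfirst hint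
    _ = _ := by field_simp; ring

end Integrals

/-- `Θ_{Φ,p}(ξ)` for `Φ(ξ) = ξ ^ m`. -/
noncomputable def thetaPhi (m p ρ ξ : ℝ) : ℝ :=
  ∫ x in ρ..ξ, (x - ρ) ^ ((p - 2) / 2) * (m * x ^ (m - 1)) ^ ((1 : ℝ) / 2)

/-- `Θ_{σ,p}(ξ)` for `σ(ξ) = ξ ^ (m / 2)`. -/
noncomputable def thetaSigma (m p ρ ξ : ℝ) : ℝ :=
  m / 2 * ∫ x in ρ..ξ, (x - ρ) ^ (p - 2) * x ^ (m - 1)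

section Theta

variable {m p ρ ξ : ℝ}

theorem sub_rpow_mul_rpow_add_thetaSigma_le (hm : 0 < m) (hp : 2 ≤ p) (hρ : 0 < ρ)
    (hξ : ρ ≤ ξ) : (ξ - ρ) ^ (p - 2) * ξ ^ m + thetaSigma m p ρ ξ ≤ 3 / 2 * ξ ^ (m + p - 2) := by
  rw [show m + p - 2 = p - 2 + m by ring]
  exact sub_rpow_mul_rpow_add_integral_le (by linarith) hm hρ hξ

theorem continuousOn_thetaPhi_integrand (hp : 2 ≤ p) (hρ : 0 < ρ) :
    ContinuousOn (fun x => (x - ρ) ^ ((p - 2) / 2) * (m * x ^ (m - 1)) ^ ((1 : ℝ) / 2))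
      (Ici ρ) :=
  (continuousOn_sub_rpow_Ici (by linarith)).mul
    ((continuousOn_const.mul (continuousOn_rpow_const_Ici hρ _)).rpow_const
      fun _ _ => Or.inr (by norm_num))

theorem thetaPhi_integrand_nonneg (hm : 0 < m) (hρ : 0 < ρ) {x : ℝ} (hx : ρ ≤ x) :
    0 ≤ (x - ρ) ^ ((p - 2) / 2) * (m * x ^ (m - 1)) ^ ((1 : ℝ) / 2) :=
  mul_nonneg (rpow_nonneg (sub_nonneg.2 hx) _)
    (rpow_nonneg (mul_nonneg hm.le (rpow_nonneg (hρ.le.trans hx) _)) _)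

theorem thetaPhi_nonneg (hm : 0 < m) (hρ : 0 < ρ) (hξ : ρ ≤ ξ) : 0 ≤ thetaPhi m p ρ ξ :=
  intervalIntegral.integral_nonneg hξ fun _ hx => thetaPhi_integrand_nonneg hm hρ hx.1

theorem mul_rpow_le_thetaPhi (hm : 0 < m) (hp : 2 ≤ p) (hρ : 0 < ρ) (hξ : 2 * ρ ≤ ξ) :
    (m * (3 / 4) ^ m) ^ ((1 : ℝ) / 2) / 4 ^ (p / 2) * ξ ^ ((m + p - 1) / 2)
      ≤ thetaPhi m p ρ ξ := by
  have hξ₀ : 0 < ξ := by linarith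
  have hK : ∀ x ∈ Icc (3 / 4 * ξ) ξ,
      (ξ / 4) ^ ((p - 2) / 2) * (m * ((3 / 4) ^ m * ξ ^ (m - 1))) ^ ((1 : ℝ) / 2)
        ≤ (x - ρ) ^ ((p - 2) / 2) * (m * x ^ (m - 1)) ^ ((1 : ℝ) / 2) := by
    intro x hx
    have hxρ : ξ / 4 ≤ x - ρ := by linarith [hx.1]
    have hpow := mul_rpow_le_rpow_sub_one hm (by norm_num) hξ₀ hx.1 hx.2
    exact mul_le_mul (rpow_le_rpow (by positivity) hxρ (by linarith))
      (rpow_le_rpow (by positivity) (by gcongr) (by norm_num)) (by positivity)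
      (rpow_nonneg (by linarith) _)
  have h1 : ξ / 4 * (ξ / 4) ^ ((p - 2) / 2) = ξ ^ (p / 2) / 4 ^ (p / 2) := by
    rw [← rpow_one_add' (by positivity) (by linarith), show 1 + (p - 2) / 2 = p / 2 by ring,
      div_rpow hξ₀.le (by norm_num)]
  have h2 : (m * ((3 / 4) ^ m * ξ ^ (m - 1))) ^ ((1 : ℝ) / 2)
      = (m * (3 / 4) ^ m) ^ ((1 : ℝ) / 2) * ξ ^ ((m - 1) / 2) := by
    rw [← mul_assoc, mul_rpow (by positivity) (by positivity), ← rpow_mul hξ₀.le, mul_one_div]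
  have h3 : ξ ^ (p / 2) * ξ ^ ((m - 1) / 2) = ξ ^ ((m + p - 1) / 2) := by
    rw [← rpow_add hξ₀]
    ring_nf
  have hcont := continuousOn_thetaPhi_integrand (m := m) hp hρ
  calc _ = (ξ - 3 / 4 * ξ) *
        ((ξ / 4) ^ ((p - 2) / 2) * (m * ((3 / 4) ^ m * ξ ^ (m - 1))) ^ ((1 : ℝ) / 2)) := by
        rw [show ξ - 3 / 4 * ξ = ξ / 4 by ring, ← mul_assoc, h1, h2, ← h3]
        ring
    _ = ∫ _ in (3 / 4 * ξ)..ξ,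
        (ξ / 4) ^ ((p - 2) / 2) * (m * ((3 / 4) ^ m * ξ ^ (m - 1))) ^ ((1 : ℝ) / 2) := by
        rw [intervalIntegral.integral_const, smul_eq_mul]
    _ ≤ ∫ x in (3 / 4 * ξ)..ξ, (x - ρ) ^ ((p - 2) / 2) * (m * x ^ (m - 1)) ^ ((1 : ℝ) / 2) :=
        intervalIntegral.integral_mono_on (by linarith) intervalIntegrable_const
          ((hcont.mono (Icc_subset_Ici_self.trans (Ici_subset_Ici.2 (by linarith)))
            ).intervalIntegrable_of_Icc (by linarith)) hK
    _ ≤ thetaPhi m p ρ ξ :=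
        intervalIntegral.integral_mono_interval (by linarith) (by linarith) le_rfl
          (ae_restrict_of_forall_mem measurableSet_Ioc fun _ hx =>
            thetaPhi_integrand_nonneg hm hρ hx.1.le)
          ((hcont.mono Icc_subset_Ici_self).intervalIntegrable_of_Icc (by linarith))

end Theta

/-- In the model case `Φ(ξ) = ξ^m`, `σ(ξ) = ξ^{m/2}`, with
`q = 2(m+p-2)/(m+p-1)`, one has `q ∈ (0,2)` and there is a constant
`c > 0`, depending only on `m`, `p`, `ρ̄`, with
`(ξ-ρ̄)^{p-2} ξ^m + Θ_{σ,p}(ξ) ≤ c(1 + Θ_{Φ,p}(ξ)^q)` for all `ξ ≥ ρ̄`. -/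
theorem theta_phi_domination
    (m p ρ : ℝ) (hm : 0 < m) (hp : 2 ≤ p) (hρ : 0 < ρ) :
    (0 < 2 * (m + p - 2) / (m + p - 1) ∧ 2 * (m + p - 2) / (m + p - 1) < 2) ∧
    ∃ c : ℝ, 0 < c ∧ ∀ ξ : ℝ, ρ ≤ ξ →
      (ξ - ρ) ^ (p - 2) * ξ ^ m
          + (m / 2) * (∫ x in ρ..ξ, (x - ρ) ^ (p - 2) * x ^ (m - 1))
        ≤ c * (1 +
            (∫ x in ρ..ξ, (x - ρ) ^ ((p - 2) / 2) * (m * x ^ (m - 1)) ^ ((1 : ℝ) / 2))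
              ^ (2 * (m + p - 2) / (m + p - 1))) := by
  have hq := two_mul_div_add_one_mem_Ioo (by linarith : 0 < m + p - 2)
  rw [show m + p - 2 + 1 = m + p - 1 by ring] at hq
  refine ⟨hq, ?_⟩
  set q := 2 * (m + p - 2) / (m + p - 1)
  have hq_exp : (m + p - 1) / 2 * q = m + p - 2 := by
    simp only [q]
    field_simp [(by linarith : m + p - 1 ≠ 0)]
  set C := (m * (3 / 4) ^ m) ^ ((1 : ℝ) / 2) / 4 ^ (p / 2)
  have hC : 0 < C := by positivity
  refine exists_le_mul_one_add_of_le_rpow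
    (L := fun ξ => (ξ - ρ) ^ (p - 2) * ξ ^ m + thetaSigma m p ρ ξ)
    (R := fun ξ => thetaPhi m p ρ ξ ^ q) hρ.le (by linarith : ρ ≤ 2 * ρ) (by linarith)
    (by norm_num : (0 : ℝ) ≤ 3 / 2) (rpow_pos_of_pos hC q)
    (fun ξ hξ => sub_rpow_mul_rpow_add_thetaSigma_le hm hp hρ hξ)
    (fun ξ hξ => rpow_nonneg (thetaPhi_nonneg hm hρ hξ) q) fun ξ hξ => ?_
  have hξ₀ : 0 ≤ ξ := by linarith
  calc C ^ q * ξ ^ (m + p - 2) = (C * ξ ^ ((m + p - 1) / 2)) ^ q := by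
        rw [mul_rpow hC.le (rpow_nonneg hξ₀ _), ← rpow_mul hξ₀, hq_exp]
    _ ≤ thetaPhi m p ρ ξ ^ q :=
        rpow_le_rpow (by positivity) (mul_rpow_le_thetaPhi hm hp hρ hξ) hq.1.le
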